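/- In the ring of formal power series in x with coefficients in the polynomial ring ℝ[y], the generating function F(x,y) = Σ_{n≥0} (Σ_{k≥0} p(n,k)·y^k)·x^n satisfies (1 − x − 2x²y)·F(x,y) = 1 + 2xy; equivalently, F(x,y) = (1 + 2xy)/(1 − x − 2x²y). -/

import Mathlib

open scoped Classical

/-- A finite set `S` of positive integers is Kentucky-2 legal if for all distinct
`i, j ∈ S` we have `|⌈i/2⌉ - ⌈j/2⌉| ≥ 2`. -/
def KLegal (S : Finset ℕ) : Prop :=
  (∀ i ∈ S, 1 ≤ i) ∧
  ∀ i ∈ S, ∀ j ∈ S, i ≠ j → 2 ≤ |(((i + 1) / 2 : ℕ) : ℤ) - (((j + 1) / 2 : ℕ) : ℤ)|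

/-- `p n k` is the number of Kentucky-2 legal subsets of `{1,…,2n}` of cardinality `k`. -/
noncomputable def p (n k : ℕ) : ℕ :=
  ((Finset.Icc 1 (2 * n)).powerset.filter (fun S => KLegal S ∧ S.card = k)).card

/-- The generating function `F(x,y) = Σ_{n≥0} (Σ_{k≥0} p n k * y^k) * x^n`, viewed as a
formal power series in `x` with coefficients in `ℝ[y]`.  (Note `p n k = 0` for `k > 2n`,
so the inner sum over `k ∈ {0,…,2n}` is the full sum `Σ_{k≥0}`.) -/
noncomputable def F : PowerSeries (Polynomial ℝ) :=
  PowerSeries.mk fun n =>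
    ∑ k ∈ Finset.range (2 * n + 1), Polynomial.C (p n k : ℝ) * Polynomial.X ^ k

lemma abs_two_le_iff (a b : ℕ) : 2 ≤ |(a:ℤ) - (b:ℤ)| ↔ a + 2 ≤ b ∨ b + 2 ≤ a := by
  rw [le_abs]; omega

lemma klegal_empty : KLegal ∅ := ⟨by simp, by simp⟩

lemma klegal_subset {S T : Finset ℕ} (h : S ⊆ T) (hT : KLegal T) : KLegal S :=
  ⟨fun i hi => hT.1 i (h hi), fun i hi j hj hij => hT.2 i (h hi) j (h hj) hij⟩

lemma p_zero (n : ℕ) : p n 0 = 1 := by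
  unfold p
  rw [Finset.card_eq_one]
  refine ⟨∅, ?_⟩
  ext S
  simp only [Finset.mem_filter, Finset.mem_powerset, Finset.card_eq_zero, Finset.mem_singleton]
  constructor
  · rintro ⟨-, -, h⟩; exact h
  · rintro rfl; exact ⟨Finset.empty_subset _, klegal_empty, rfl⟩

lemma p_eq_zero (n k : ℕ) (h : 2*n < k) : p n k = 0 := by
  unfold p
  rw [Finset.card_eq_zero, Finset.filter_eq_empty_iff]
  rintro S hS ⟨-, hcard⟩
  have := Finset.card_le_card (Finset.mem_powerset.mp hS)
  rw [Nat.card_Icc] at this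
  omega

lemma count_with (n k m : ℕ) (hm1 : 2*n+3 ≤ m) (hm2 : m ≤ 2*n+4) :
    ((Finset.Icc 1 (2*(n+2))).powerset.filter
      (fun S => (KLegal S ∧ S.card = k+1) ∧ m ∈ S)).card = p n k := by
  unfold p
  apply Finset.card_nbij' (fun S => S.erase m) (fun T => insert m T)
  · intro S hS
    simp only [Finset.mem_coe, Finset.mem_filter, Finset.mem_powerset] at hS
    obtain ⟨hsub, ⟨hleg, hcard⟩, hmem⟩ := hS
    simp only [Finset.mem_coe, Finset.mem_filter, Finset.mem_powerset]
    refine ⟨?_, klegal_subset (Finset.erase_subset _ _) hleg, ?_⟩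
    · intro j hj
      have hjS := Finset.mem_of_mem_erase hj
      have hjm : j ≠ m := Finset.ne_of_mem_erase hj
      have h1 := hleg.1 j hjS
      have h2 := hleg.2 j hjS m hmem hjm
      have hjle : j ∈ Finset.Icc 1 (2*(n+2)) := hsub hjS
      rw [Finset.mem_Icc] at hjle ⊢
      rw [abs_two_le_iff] at h2
      omega
    · rw [Finset.card_erase_of_mem hmem, hcard]; omega
  · intro T hT
    simp only [Finset.mem_coe, Finset.mem_filter, Finset.mem_powerset] at hT
    obtain ⟨hsub, hleg, hcard⟩ := hT
    have hmT : m ∉ T := by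
      intro h
      have := Finset.mem_Icc.mp (hsub h)
      omega
    simp only [Finset.mem_coe, Finset.mem_filter, Finset.mem_powerset]
    refine ⟨?_, ⟨⟨?_, ?_⟩, ?_⟩, Finset.mem_insert_self m T⟩
    · intro j hj
      rcases Finset.mem_insert.mp hj with rfl | hj
      · rw [Finset.mem_Icc]; omega
      · have := Finset.mem_Icc.mp (hsub hj); rw [Finset.mem_Icc]; omega
    · intro i hi
      rcases Finset.mem_insert.mp hi with rfl | hi
      · omega
      · exact hleg.1 i hi
    · intro i hi j hj hij
      have key : ∀ a ∈ T, 2 ≤ |(((a+1)/2 : ℕ) : ℤ) - (((m+1)/2 : ℕ) : ℤ)| := by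
        intro a ha
        have := Finset.mem_Icc.mp (hsub ha)
        rw [abs_two_le_iff]
        omega
      rcases Finset.mem_insert.mp hi with hi' | hi' <;>
        rcases Finset.mem_insert.mp hj with hj' | hj'
      · exact absurd (hi'.trans hj'.symm) hij
      · rw [hi', abs_sub_comm]; exact key j hj'
      · rw [hj']; exact key i hi'
      · exact hleg.2 i hi' j hj' hij
    · rw [Finset.card_insert_of_notMem hmT, hcard]
  · intro S hS
    simp only [Finset.mem_coe, Finset.mem_filter] at hS
    exact Finset.insert_erase hS.2.2
  · intro T hT
    simp only [Finset.mem_coe, Finset.mem_filter, Finset.mem_powerset] at hT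
    apply Finset.erase_insert
    intro h
    have := Finset.mem_Icc.mp (hT.1 h)
    omega

lemma not_both {S : Finset ℕ} {n : ℕ} (hleg : KLegal S) (h3 : 2*n+3 ∈ S) : 2*n+4 ∉ S := by
  intro h4
  have := hleg.2 (2*n+3) h3 (2*n+4) h4 (by omega)
  rw [abs_two_le_iff] at this
  omega

lemma count_without (n k : ℕ) :
    ((Finset.Icc 1 (2*(n+2))).powerset.filter
      (fun S => ((KLegal S ∧ S.card = k) ∧ ¬(2*n+4 ∈ S)) ∧ ¬(2*n+3 ∈ S))).card = p (n+1) k := by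
  unfold p
  congr 1
  ext S
  simp only [Finset.mem_filter, Finset.mem_powerset]
  constructor
  · rintro ⟨hsub, ⟨hP, h4⟩, h3⟩
    refine ⟨?_, hP⟩
    intro j hj
    have hjb := Finset.mem_Icc.mp (hsub hj)
    have hj3 : j ≠ 2*n+3 := fun h => h3 (h ▸ hj)
    have hj4 : j ≠ 2*n+4 := fun h => h4 (h ▸ hj)
    rw [Finset.mem_Icc]
    omega
  · rintro ⟨hsub, hP⟩
    have hb : ∀ j ∈ S, j ≤ 2*n+2 := fun j hj => by
      have := Finset.mem_Icc.mp (hsub hj); omega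
    refine ⟨fun j hj => ?_, ⟨hP, fun h => by have := hb _ h; omega⟩,
      fun h => by have := hb _ h; omega⟩
    have := Finset.mem_Icc.mp (hsub hj)
    rw [Finset.mem_Icc]
    omega

lemma p_rec (n k : ℕ) : p (n+2) (k+1) = p (n+1) (k+1) + 2 * p n k := by
  classical
  have h4 := count_with n k (2*n+4) (by omega) (by omega)
  have h3 := count_with n k (2*n+3) (by omega) (by omega)
  have hw := count_without n (k+1)
  conv_lhs => unfold p
  rw [← Finset.card_filter_add_card_filter_not (fun S : Finset ℕ => (2*n+3:ℕ) ∈ S)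
      (s := (Finset.Icc 1 (2*(n+2))).powerset.filter (fun S => KLegal S ∧ S.card = k+1))]
  rw [← Finset.card_filter_add_card_filter_not (fun S : Finset ℕ => (2*n+4:ℕ) ∈ S)
      (s := ((Finset.Icc 1 (2*(n+2))).powerset.filter (fun S => KLegal S ∧ S.card = k+1)).filter
        (fun S => ¬(2*n+3:ℕ) ∈ S))]
  rw [Finset.filter_filter, Finset.filter_filter, Finset.filter_filter, Finset.filter_filter,
    Finset.filter_filter]
  have e4 : ((Finset.Icc 1 (2*(n+2))).powerset.filter
      (fun S => (KLegal S ∧ S.card = k+1) ∧ ¬(2*n+3:ℕ) ∈ S ∧ (2*n+4:ℕ) ∈ S)) =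
      ((Finset.Icc 1 (2*(n+2))).powerset.filter
      (fun S => (KLegal S ∧ S.card = k+1) ∧ (2*n+4:ℕ) ∈ S)) := by
    apply Finset.filter_congr
    intro S _
    constructor
    · rintro ⟨hP, -, h⟩; exact ⟨hP, h⟩
    · rintro ⟨hP, h⟩
      exact ⟨hP, fun h3 => not_both hP.1 h3 h, h⟩
  have ew : ((Finset.Icc 1 (2*(n+2))).powerset.filter
      (fun S => (KLegal S ∧ S.card = k+1) ∧ ¬(2*n+3:ℕ) ∈ S ∧ ¬(2*n+4:ℕ) ∈ S)) =
      ((Finset.Icc 1 (2*(n+2))).powerset.filter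
      (fun S => ((KLegal S ∧ S.card = k+1) ∧ ¬(2*n+4:ℕ) ∈ S) ∧ ¬(2*n+3:ℕ) ∈ S)) := by
    apply Finset.filter_congr
    intro S _
    constructor
    · rintro ⟨hP, h3, h4⟩; exact ⟨⟨hP, h4⟩, h3⟩
    · rintro ⟨⟨hP, h4⟩, h3⟩; exact ⟨hP, h3, h4⟩
  rw [e4, ew, h3, h4, hw]
  ring

instance KLegal.decidable : DecidablePred KLegal := fun S => by
  unfold KLegal; infer_instance

lemma p_one_one : p 1 1 = 2 := by
  unfold p
  rw [Finset.filter_congr_decidable]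
  decide

lemma p_one_two : p 1 2 = 0 := by
  unfold p
  rw [Finset.filter_congr_decidable]
  decide

noncomputable def A (n : ℕ) : Polynomial ℝ :=
  ∑ k ∈ Finset.range (2 * n + 1), Polynomial.C (p n k : ℝ) * Polynomial.X ^ k

lemma coeff_F (n : ℕ) : PowerSeries.coeff n F = A n := by
  simp [F, A]

lemma A_eq (n N : ℕ) (h : 2*n+1 ≤ N) :
    A n = ∑ k ∈ Finset.range N, Polynomial.C (p n k : ℝ) * Polynomial.X ^ k := by
  unfold A
  apply Finset.sum_subset (Finset.range_subset_range.mpr h)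
  intro k _ hk2
  rw [Finset.mem_range, not_lt] at hk2
  rw [p_eq_zero n k (by omega)]
  simp

lemma A_zero : A 0 = 1 := by
  unfold A
  simp [p_zero]

lemma A_one : A 1 = 1 + 2 * Polynomial.X := by
  unfold A
  rw [show 2*1+1 = 3 from rfl, Finset.sum_range_succ, Finset.sum_range_succ,
    Finset.sum_range_one, p_zero, p_one_one, p_one_two]
  push_cast
  simp only [map_one, map_zero, map_ofNat]
  ring

lemma A_rec (n : ℕ) : A (n+2) = A (n+1) + 2 * Polynomial.X * A n := by
  rw [A_eq (n+2) (2*n+4+1) (by omega), A_eq (n+1) (2*n+4+1) (by omega),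
    A_eq n (2*n+4) (by omega)]
  rw [Finset.sum_range_succ', Finset.sum_range_succ' _ (2*n+4), Finset.mul_sum]
  have key : ∀ k ∈ Finset.range (2*n+4),
      Polynomial.C ((p (n+2) (k+1) : ℝ)) * Polynomial.X ^ (k+1) =
      Polynomial.C ((p (n+1) (k+1) : ℝ)) * Polynomial.X ^ (k+1) +
        2 * Polynomial.X * (Polynomial.C ((p n k : ℝ)) * Polynomial.X ^ k) := by
    intro k _
    rw [p_rec]
    push_cast
    rw [map_add, map_mul, map_ofNat]
    ring
  rw [Finset.sum_congr rfl key, Finset.sum_add_distrib]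
  simp only [p_zero]
  ring

/-- `(1 - x - 2x²y) * F(x,y) = 1 + 2xy`, i.e. `F(x,y) = (1 + 2xy)/(1 - x - 2x²y)`. -/
theorem kentucky_generating_function :
    (1 - PowerSeries.X - 2 * PowerSeries.X ^ 2 * PowerSeries.C (R := Polynomial ℝ) Polynomial.X) * F =
      1 + 2 * PowerSeries.X * PowerSeries.C (R := Polynomial ℝ) Polynomial.X := by
  have expand : (1 - PowerSeries.X - 2 * PowerSeries.X ^ 2 *
      PowerSeries.C (R := Polynomial ℝ) Polynomial.X) * F =
      F - PowerSeries.X * F -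
        PowerSeries.X * (PowerSeries.X *
          ((2 * PowerSeries.C (R := Polynomial ℝ) Polynomial.X) * F)) := by ring
  have h2 : 2 * PowerSeries.X * PowerSeries.C (R := Polynomial ℝ) Polynomial.X =
      PowerSeries.X * PowerSeries.C (R := Polynomial ℝ) (2 * Polynomial.X) := by
    rw [map_mul, map_ofNat]; ring
  have hC : (2 * PowerSeries.C (R := Polynomial ℝ) Polynomial.X) =
      PowerSeries.C (R := Polynomial ℝ) (2 * Polynomial.X) := by
    rw [map_mul, map_ofNat]
  rw [expand]
  apply PowerSeries.ext
  intro n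
  rw [map_sub, map_sub, map_add, h2, hC]
  match n with
  | 0 =>
      rw [PowerSeries.coeff_zero_X_mul, PowerSeries.coeff_zero_X_mul, coeff_F, A_zero]
      simp
  | 1 =>
      rw [PowerSeries.coeff_succ_X_mul, PowerSeries.coeff_succ_X_mul,
        PowerSeries.coeff_zero_X_mul, coeff_F, coeff_F, A_zero, A_one,
        PowerSeries.coeff_one, PowerSeries.coeff_succ_X_mul, PowerSeries.coeff_zero_C]
      norm_num
  | (m+2) =>
      rw [PowerSeries.coeff_succ_X_mul, PowerSeries.coeff_succ_X_mul,
        PowerSeries.coeff_succ_X_mul, PowerSeries.coeff_succ_X_mul,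
        PowerSeries.coeff_C_mul, coeff_F, coeff_F, coeff_F, A_rec,
        PowerSeries.coeff_one, PowerSeries.coeff_C]
      norm_num
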